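/- arXiv:2112.02430 — 4 statements merged into one kernel-verified Lean document; each statement's English description precedes it below -/
import Mathlib

section
/- Let F be a field, let V_1 and V_2 be nonzero finite-dimensional F-vector spaces, and let V = V_1 ⊗_F V_2. Let G_2 ≤ GL(V_2) be a subgroup acting absolutely irreducibly on V_2. Then the normalizer in GL(V) of the subgroup {id_{V_1} ⊗ g : g ∈ G_2} is exactly {h ⊗ h' : h ∈ GL(V_1), h' ∈ GL(V_2) with h' G_2 h'^{-1} = G_2}; that is, N_{GL(V)}(1 ⊗ G_2) = GL(V_1) ⊗ N_{GL(V_2)}(G_2). -/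
/-!
Write `C g = 1 ⊗ g`. If `h` normalizes `C(G₂)`, then `h (1 ⊗ g) h⁻¹ = 1 ⊗ σ(g)` for every
`g ∈ G₂`. Contracting `h (v₀ ⊗ w)` against a suitable functional on `V₁` gives a nonzero
`f : V₂ → V₂` with `f g = σ(g) f`; its kernel is `G₂`-invariant, so `f` is invertible and
`k = (1 ⊗ f)⁻¹ h` commutes with `1 ⊗ G₂`. Every slice `w ↦ ⟨l, k (v ⊗ w)⟩` of `k` then commutes
with `G₂`, hence is a scalar by absolute irreducibility; so `k = ψ ⊗ 1` and `h = ψ ⊗ f`.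
Conversely, conjugation by `e ⊗ e'` sends `1 ⊗ g` to `1 ⊗ e' g e'⁻¹`, and `C` is injective, so
`e ⊗ e'` normalizes `C(G₂)` exactly when `e'` normalizes `G₂`.
-/

open scoped TensorProduct

namespace TensorProduct

section CommRing

variable {R M N : Type*} [CommRing R] [AddCommGroup M] [Module R M] [AddCommGroup N]
  [Module R N]

noncomputable def dualContract (l : Module.Dual R M) : M ⊗[R] N →ₗ[R] N :=
  TensorProduct.lid R N ∘ₗ l.rTensor N

@[simp]
theorem dualContract_tmul (l : Module.Dual R M) (m : M) (n : N) :
    dualContract l (m ⊗ₜ[R] n) = l m • n := rfl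

theorem dualContract_lTensor (l : Module.Dual R M) (g : N →ₗ[R] N) (x : M ⊗[R] N) :
    dualContract l (g.lTensor M x) = g (dualContract l x) := by
  induction x using TensorProduct.induction_on with
  | zero => simp
  | tmul m n => simp
  | add x y hx hy => simp [hx, hy]

@[simp]
theorem dualContract_linearEquiv_lTensor (l : Module.Dual R M) (g : N ≃ₗ[R] N)
    (x : M ⊗[R] N) : dualContract l (g.lTensor M x) = g (dualContract l x) := by
  rw [← LinearEquiv.coe_coe, LinearEquiv.coe_lTensor, dualContract_lTensor, LinearEquiv.coe_coe]

theorem apply_rid_lTensor (l : Module.Dual R M) (μ : Module.Dual R N) (x : M ⊗[R] N) :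
    l (TensorProduct.rid R M (μ.lTensor M x)) = μ (dualContract l x) := by
  induction x using TensorProduct.induction_on with
  | zero => simp
  | tmul m n => simp [mul_comm]
  | add x y hx hy => simp [hx, hy]

theorem ext_dualContract [Module.Free R M] {x y : M ⊗[R] N}
    (h : ∀ l : Module.Dual R M, dualContract l x = dualContract l y) : x = y := by
  classical
  let ℬ := Module.Free.chooseBasis R M
  refine (equivFinsuppOfBasisLeft ℬ).injective (Finsupp.ext fun i => ?_)
  rw [equivFinsuppOfBasisLeft_apply, equivFinsuppOfBasisLeft_apply]
  exact h (ℬ.coord i)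

end CommRing

theorem tmul_eq_zero_iff {F V W : Type*} [Field F] [AddCommGroup V] [Module F V]
    [AddCommGroup W] [Module F W] {v : V} {w : W} : v ⊗ₜ[F] w = 0 ↔ v = 0 ∨ w = 0 := by
  refine ⟨fun h => or_iff_not_imp_left.mpr fun hv => ?_, by rintro (rfl | rfl) <;> simp⟩
  obtain ⟨l, hl⟩ := Module.Projective.exists_dual_eq_one F hv
  simpa [hl] using congr(dualContract l $h)

end TensorProduct

open TensorProduct

namespace LinearEquiv

variable {R M N : Type*} [CommRing R] [AddCommGroup M] [Module R M] [AddCommGroup N]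
  [Module R N]

variable (R M N) in
@[simps]
noncomputable def lTensorMonoidHom : (N ≃ₗ[R] N) →* (M ⊗[R] N ≃ₗ[R] M ⊗[R] N) where
  toFun g := g.lTensor M
  map_one' := congr_refl_refl
  map_mul' f g := lTensor_trans M f g

theorem congr_mul_lTensor_mul_inv (e : M ≃ₗ[R] M) (e' g : N ≃ₗ[R] N) :
    congr e e' * g.lTensor M * (congr e e')⁻¹ = (e' * g * e'⁻¹).lTensor M := by
  change congr e e' * congr 1 g * congr e⁻¹ e'⁻¹ = congr 1 (e' * g * e'⁻¹)
  rw [← congr_mul, ← congr_mul]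
  congr 1
  group

theorem image_conj_congr_image_lTensor (e : M ≃ₗ[R] M) (e' : N ≃ₗ[R] N)
    (G : Set (N ≃ₗ[R] N)) :
    MulAut.conj (congr e e') '' (lTensorMonoidHom R M N '' G) =
      lTensorMonoidHom R M N '' (MulAut.conj e' '' G) := by
  simp only [Set.image_image, MulAut.conj_apply, lTensorMonoidHom_apply,
    congr_mul_lTensor_mul_inv]

theorem lTensorMonoidHom_injective {F V W : Type*} [Field F] [AddCommGroup V] [Module F V]
    [AddCommGroup W] [Module F W] [Nontrivial V] :
    Function.Injective (lTensorMonoidHom F V W) := by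
  intro a b hab
  obtain ⟨v, hv⟩ := exists_ne (0 : V)
  ext w
  have : v ⊗ₜ[F] (a w - b w) = 0 := by
    rw [tmul_sub, sub_eq_zero]
    exact congr($hab (v ⊗ₜ w))
  simpa [tmul_eq_zero_iff, hv, sub_eq_zero] using this

end LinearEquiv

open LinearEquiv

section Irreducible

variable {F V₁ V₂ : Type*} [Field F] [AddCommGroup V₁] [Module F V₁] [AddCommGroup V₂]
  [Module F V₂]

def IsIrreducibleFamily (G : Set (V₂ ≃ₗ[F] V₂)) : Prop :=
  ∀ W : Submodule F V₂, (∀ g ∈ G, ∀ v ∈ W, g v ∈ W) → W = ⊥ ∨ W = ⊤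

def HasScalarCommutant (G : Set (V₂ ≃ₗ[F] V₂)) : Prop :=
  ∀ φ : Module.End F V₂, (∀ g ∈ G, ∀ v : V₂, φ (g v) = g (φ v)) → ∃ c : F, φ = c • LinearMap.id

variable {G : Set (V₂ ≃ₗ[F] V₂)}

theorem exists_eq_rTensor_of_commute_lTensor [Nontrivial V₂] (habs : HasScalarCommutant G)
    (k : Module.End F (V₁ ⊗[F] V₂))
    (hk : ∀ g ∈ G, ∀ x, k (g.lTensor V₁ x) = g.lTensor V₁ (k x)) :
    ∃ ψ : Module.End F V₁, k = ψ.rTensor V₂ := by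
  obtain ⟨w₀, hw₀⟩ := exists_ne (0 : V₂)
  obtain ⟨μ, hμ⟩ := Module.Projective.exists_dual_eq_one F hw₀
  -- each slice `u ↦ dualContract l (k (v ⊗ u))` is a scalar `c`, and `l (ψ v) = c` as `μ w₀ = 1`
  refine ⟨TensorProduct.rid F V₁ ∘ₗ μ.lTensor V₁ ∘ₗ k ∘ₗ (TensorProduct.mk F V₁ V₂).flip w₀,
    TensorProduct.ext' fun v w => ext_dualContract fun l => ?_⟩
  obtain ⟨c, hc⟩ := habs (dualContract l ∘ₗ k ∘ₗ TensorProduct.mk F V₁ V₂ v) fun g hg u => by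
    simpa using congr(dualContract l $(hk g hg (v ⊗ₜ u)))
  have hslice : ∀ u, dualContract l (k (v ⊗ₜ u)) = c • u := fun u => congr($hc u)
  simp [apply_rid_lTensor, hslice, hμ]

theorem exists_eq_congr_one_of_commute [FiniteDimensional F V₁] [Nontrivial V₂]
    (habs : HasScalarCommutant G) (k : V₁ ⊗[F] V₂ ≃ₗ[F] V₁ ⊗[F] V₂)
    (hk : ∀ g ∈ G, Commute k (lTensorMonoidHom F V₁ V₂ g)) :
    ∃ e : V₁ ≃ₗ[F] V₁, k = congr e 1 := by
  obtain ⟨ψ, hψ⟩ := exists_eq_rTensor_of_commute_lTensor habs k.toLinearMap fun g hg x =>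
    congr($((hk g hg).eq) x)
  obtain ⟨w₀, hw₀⟩ := exists_ne (0 : V₂)
  have hψinj : Function.Injective ψ := by
    refine (injective_iff_map_eq_zero ψ).mpr fun v hv => ?_
    have : k (v ⊗ₜ w₀) = 0 := by
      rw [← LinearEquiv.coe_coe, hψ, LinearMap.rTensor_tmul, hv, zero_tmul]
    simpa [hw₀, tmul_eq_zero_iff] using this
  exact ⟨LinearEquiv.ofInjectiveEndo ψ hψinj, LinearEquiv.toLinearMap_injective hψ⟩

theorem exists_conj_lTensor_eq_of_irreducible [FiniteDimensional F V₂] [Nontrivial V₁]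
    [Nontrivial V₂] (hirr : IsIrreducibleFamily G) (h : V₁ ⊗[F] V₂ ≃ₗ[F] V₁ ⊗[F] V₂)
    (hh : ∀ g ∈ G,
      MulAut.conj h (lTensorMonoidHom F V₁ V₂ g) ∈ Set.range (lTensorMonoidHom F V₁ V₂)) :
    ∃ e' : V₂ ≃ₗ[F] V₂, ∀ g ∈ G,
      MulAut.conj h (lTensorMonoidHom F V₁ V₂ g) = lTensorMonoidHom F V₁ V₂ (MulAut.conj e' g) := by
  choose σ hσ using hh
  obtain ⟨v₀, hv₀⟩ := exists_ne (0 : V₁)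
  obtain ⟨w₀, hw₀⟩ := exists_ne (0 : V₂)
  obtain ⟨l, hl⟩ : ∃ l : Module.Dual F V₁, dualContract l (h (v₀ ⊗ₜ w₀)) ≠ 0 := by
    by_contra! hl
    have : h (v₀ ⊗ₜ w₀) = 0 := ext_dualContract fun l => by simp [hl]
    simp [tmul_eq_zero_iff, hv₀, hw₀] at this
  set f : V₂ →ₗ[F] V₂ := dualContract l ∘ₗ h.toLinearMap ∘ₗ TensorProduct.mk F V₁ V₂ v₀
  have hf : ∀ g (hg : g ∈ G) w, f (g w) = σ g hg (f w) := by
    intro g hg w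
    have hσg := hσ g hg
    rw [MulAut.conj_apply, eq_mul_inv_iff_mul_eq] at hσg
    have := congr(dualContract l ($hσg (v₀ ⊗ₜ w)))
    rw [LinearEquiv.mul_apply, LinearEquiv.mul_apply] at this
    simpa [f] using this.symm
  have hinj : Function.Injective f := by
    rw [← LinearMap.ker_eq_bot]
    refine (hirr (LinearMap.ker f) fun g hg w hw => ?_).resolve_right fun htop => hl ?_
    · rw [LinearMap.mem_ker, hf g hg, LinearMap.mem_ker.mp hw, map_zero]
    · exact (htop ▸ Submodule.mem_top : w₀ ∈ LinearMap.ker f)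
  refine ⟨LinearEquiv.ofInjectiveEndo f hinj, fun g hg => ?_⟩
  rw [← hσ g hg, MulAut.conj_apply]
  congr 1
  rw [eq_mul_inv_iff_mul_eq]
  ext w
  exact (hf g hg w).symm

theorem exists_eq_congr_of_conj_mem_range [FiniteDimensional F V₁] [FiniteDimensional F V₂]
    [Nontrivial V₁] [Nontrivial V₂] (hirr : IsIrreducibleFamily G) (habs : HasScalarCommutant G)
    (h : V₁ ⊗[F] V₂ ≃ₗ[F] V₁ ⊗[F] V₂)
    (hh : ∀ g ∈ G,
      MulAut.conj h (lTensorMonoidHom F V₁ V₂ g) ∈ Set.range (lTensorMonoidHom F V₁ V₂)) :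
    ∃ (e : V₁ ≃ₗ[F] V₁) (e' : V₂ ≃ₗ[F] V₂), h = congr e e' := by
  obtain ⟨e', he'⟩ := exists_conj_lTensor_eq_of_irreducible hirr h hh
  set C := lTensorMonoidHom F V₁ V₂
  obtain ⟨e, he⟩ := exists_eq_congr_one_of_commute habs ((C e')⁻¹ * h) fun g hg => by
    have hconj := he' g hg
    simp only [MulAut.conj_apply, map_mul, map_inv] at hconj
    calc (C e')⁻¹ * h * C g = (C e')⁻¹ * (h * C g * h⁻¹) * h := by group
      _ = C g * ((C e')⁻¹ * h) := by rw [hconj]; group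
  refine ⟨e, e', ?_⟩
  calc h = C e' * ((C e')⁻¹ * h) := by group
    _ = congr e e' := by rw [he]; exact (congr_mul 1 e' e 1).symm.trans (by simp)

end Irreducible

/-- If `G₂ ≤ GL(V₂)` acts absolutely irreducibly on `V₂`, then the
normalizer in `GL(V₁ ⊗ V₂)` of `1 ⊗ G₂` is exactly `GL(V₁) ⊗ N_{GL(V₂)}(G₂)`. -/
theorem stmt_6 (F V₁ V₂ : Type) [Field F]
    [AddCommGroup V₁] [Module F V₁] [FiniteDimensional F V₁] [Nontrivial V₁]
    [AddCommGroup V₂] [Module F V₂] [FiniteDimensional F V₂] [Nontrivial V₂]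
    (G₂ : Subgroup (V₂ ≃ₗ[F] V₂))
    (hirr : ∀ W : Submodule F V₂, (∀ g ∈ G₂, ∀ v ∈ W, g v ∈ W) → W = ⊥ ∨ W = ⊤)
    (habs : ∀ φ : Module.End F V₂, (∀ g ∈ G₂, ∀ v : V₂, φ (g v) = g (φ v)) →
      ∃ c : F, φ = c • LinearMap.id)
    (S : Set ((V₁ ⊗[F] V₂) ≃ₗ[F] (V₁ ⊗[F] V₂)))
    (hS : S = {x | ∃ g ∈ G₂, x = TensorProduct.congr (LinearEquiv.refl F V₁) g}) :
    {h : (V₁ ⊗[F] V₂) ≃ₗ[F] (V₁ ⊗[F] V₂) | (fun x => h * x * h⁻¹) '' S = S} =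
      {h | ∃ (e : V₁ ≃ₗ[F] V₁) (e' : V₂ ≃ₗ[F] V₂),
        e' ∈ Subgroup.normalizer (G₂ : Set (V₂ ≃ₗ[F] V₂)) ∧ h = TensorProduct.congr e e'} := by
  have hS' : S = lTensorMonoidHom F V₁ V₂ '' G₂ := by
    rw [hS]
    ext x
    simp [eq_comm, LinearEquiv.lTensor]
  subst hS'
  ext h
  change MulAut.conj h '' _ = _ ↔ _
  constructor
  · intro hc
    obtain ⟨e, e', rfl⟩ := exists_eq_congr_of_conj_mem_range hirr habs h fun g hg =>
      Set.image_subset_range _ _ (hc ▸ Set.mem_image_of_mem _ (Set.mem_image_of_mem _ hg))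
    refine ⟨e, e', ?_, rfl⟩
    rw [image_conj_congr_image_lTensor] at hc
    exact Subgroup.mem_normalizer_iff_conj_image_eq.mpr
      (Set.image_injective.mpr lTensorMonoidHom_injective hc)
  · rintro ⟨e, e', he', rfl⟩
    rw [image_conj_congr_image_lTensor, Subgroup.mem_normalizer_iff_conj_image_eq.mp he']
end

section
/- Let k ⊆ F be an extension of finite fields, G a finite group, and W a finite-dimensional kG-module such that V = W ⊗_k F is absolutely irreducible as an FG-module; identify G with its image in GL(V, F) and identify W with the k-subspace {w ⊗ 1 : w ∈ W} of V. Then every F-linear automorphism h of V normalizing G in GL(V, F) can be written h = λ · h', where λ ∈ F^× is a scalar and h' ∈ GL(V, F) stabilises W (equivalently, h' is the F-linear extension of a k-linear automorphism of W); that is, N_{GL(V,F)}(G) ≤ N_{GL(V,F)}(W) F^×. -/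
open scoped TensorProduct

section Aux

variable (k F : Type) [Field k] [Fintype k] [Field F] [Fintype F] [Algebra k F]

/-- Every element of `F` fixed by `x ↦ x ^ |k|` lies in the image of `k`. -/
lemma aux_fixed_mem (a : F) (ha : a ^ Fintype.card k = a) : ∃ d : k, algebraMap k F d = a := by
  classical
  set q := Fintype.card k with hq
  have hq2 : 2 ≤ q := Fintype.one_lt_card
  set P : Polynomial F := Polynomial.X ^ q - Polynomial.X with hP
  have hPdeg : P.natDegree = q := by
    rw [hP, Polynomial.natDegree_sub_eq_left_of_natDegree_lt] <;>
      simp [Polynomial.natDegree_X_pow] <;> omega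
  have hPne : P ≠ 0 := by
    intro h0
    rw [h0] at hPdeg
    simp at hPdeg
    omega
  set T : Finset F := Finset.univ.image (algebraMap k F) with hT
  have hTcard : T.card = q := by
    rw [hT, Finset.card_image_of_injective _ (algebraMap k F).injective, Finset.card_univ]
  have hroot : ∀ x : F, x ^ q = x → x ∈ P.roots.toFinset := by
    intro x hx
    rw [Multiset.mem_toFinset, Polynomial.mem_roots hPne]
    simp [hP, Polynomial.IsRoot, hx]
  by_contra hcon
  have haT : a ∉ T := by
    intro hmem
    rw [hT, Finset.mem_image] at hmem
    obtain ⟨d, -, hd⟩ := hmem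
    exact hcon ⟨d, hd⟩
  have hsub : insert a T ⊆ P.roots.toFinset := by
    intro x hx
    rcases Finset.mem_insert.mp hx with rfl | hx
    · exact hroot x ha
    · rw [hT, Finset.mem_image] at hx
      obtain ⟨d, -, rfl⟩ := hx
      exact hroot _ (by rw [← map_pow, FiniteField.pow_card])
  have h1 : (insert a T).card = q + 1 := by rw [Finset.card_insert_of_notMem haT, hTcard]
  have h2 : (insert a T).card ≤ q := by
    calc (insert a T).card ≤ P.roots.toFinset.card := Finset.card_le_card hsub
      _ ≤ Multiset.card P.roots := Multiset.toFinset_card_le _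
      _ ≤ P.natDegree := Polynomial.card_roots' P
      _ = q := hPdeg
  omega

/-- The relative Frobenius `x ↦ x ^ |k|` as a `k`-algebra homomorphism. -/
noncomputable def frobHom : F →ₐ[k] F where
  toFun x := x ^ Fintype.card k
  map_one' := one_pow _
  map_mul' x y := mul_pow x y _
  map_zero' := zero_pow Fintype.card_pos.ne'
  map_add' x y := by
    obtain ⟨p, hp⟩ := CharP.exists k
    haveI : CharP F p := charP_of_injective_algebraMap (algebraMap k F).injective p
    obtain ⟨n, hprime, hcard⟩ := FiniteField.card k p
    haveI : Fact p.Prime := ⟨hprime⟩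
    haveI : ExpChar F p := ExpChar.prime hprime
    rw [hcard]
    exact add_pow_expChar_pow x y p (n : ℕ)
  commutes' d := by
    show algebraMap k F d ^ Fintype.card k = algebraMap k F d
    rw [← map_pow, FiniteField.pow_card]

/-- The relative Frobenius `x ↦ x ^ |k|` as a `k`-algebra equivalence. -/
noncomputable def frobAlg : F ≃ₐ[k] F :=
  AlgEquiv.ofBijective (frobHom k F)
    (Finite.injective_iff_bijective.mp (frobHom k F).toRingHom.injective)

lemma frobAlg_apply (a : F) : frobAlg k F a = a ^ Fintype.card k := rfl

variable (W : Type) [AddCommGroup W] [Module k W]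

/-- The semilinear map `a ⊗ w ↦ a^{|k|} ⊗ w` on `F ⊗[k] W`. -/
noncomputable def sAux : (F ⊗[k] W) ≃ₗ[k] (F ⊗[k] W) :=
  TensorProduct.congr (frobAlg k F).toLinearEquiv (LinearEquiv.refl k W)

lemma sAux_tmul (a : F) (w : W) : sAux k F W (a ⊗ₜ w) = (a ^ Fintype.card k) ⊗ₜ w := by
  simp [sAux, frobAlg_apply]

lemma sAux_smul (c : F) (x : F ⊗[k] W) :
    sAux k F W (c • x) = (c ^ Fintype.card k) • sAux k F W x := by
  induction x using TensorProduct.induction_on with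
  | zero => simp
  | tmul a w =>
      rw [TensorProduct.smul_tmul', sAux_tmul, smul_eq_mul, mul_pow, sAux_tmul,
        TensorProduct.smul_tmul', smul_eq_mul]
  | add x y hx hy => rw [smul_add, map_add, hx, hy, map_add, smul_add]

/-- The fixed points of `sAux` are exactly the `k`-subspace `{1 ⊗ w}`. -/
lemma sAux_fixed_iff [FiniteDimensional k W] (x : F ⊗[k] W) :
    sAux k F W x = x ↔ x ∈ LinearMap.range (TensorProduct.mk k F W 1) := by
  classical
  constructor
  · intro hx
    set b := Module.finBasis k W with hb
    set bF := Algebra.TensorProduct.basis F b with hbF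
    set c : Fin (Module.finrank k W) → F := fun i => bF.repr x i with hc
    have hxsum : x = ∑ i, c i • bF i := (bF.sum_repr x).symm
    have hbFfix : ∀ i, sAux k F W (bF i) = bF i := by
      intro i
      rw [hbF, Algebra.TensorProduct.basis_apply, sAux_tmul, one_pow]
    have hsx : sAux k F W x = ∑ i, (c i ^ Fintype.card k) • bF i := by
      rw [hxsum, map_sum]
      exact Finset.sum_congr rfl fun i _ => by rw [sAux_smul, hbFfix]
    have hcoord : ∀ i, c i ^ Fintype.card k = c i := by
      have h2 : ∑ i, (c i ^ Fintype.card k) • bF i = ∑ i, c i • bF i := by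
        rw [← hsx, hx, hxsum]
      intro i
      have e1 := congrFun (bF.repr_sum_self (fun j => c j ^ Fintype.card k)) i
      have e2 := congrFun (bF.repr_sum_self c) i
      calc c i ^ Fintype.card k
          = bF.repr (∑ j, c j ^ Fintype.card k • bF j) i := e1.symm
        _ = bF.repr (∑ j, c j • bF j) i := by rw [h2]
        _ = c i := e2
    choose d hd using fun i => aux_fixed_mem k F (c i) (hcoord i)
    refine ⟨∑ i, d i • b i, ?_⟩
    calc (TensorProduct.mk k F W 1) (∑ i, d i • b i)
        = ∑ i, (1 : F) ⊗ₜ[k] (d i • b i) := by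
          rw [TensorProduct.mk_apply, TensorProduct.tmul_sum]
      _ = ∑ i, c i • bF i := by
          refine Finset.sum_congr rfl fun i _ => ?_
          rw [TensorProduct.tmul_smul, hbF, Algebra.TensorProduct.basis_apply, ← hd i,
            algebraMap_smul]
      _ = x := hxsum.symm
  · rintro ⟨w, rfl⟩
    rw [TensorProduct.mk_apply, sAux_tmul, one_pow]

end Aux

/-- Hilbert 90 for finite fields: an element whose "norm" is 1 is a `(q-1)`-st power. -/
lemma aux_hilbert (F : Type) [Field F] [Fintype F] {c : F} (hc : c ≠ 0) {e m : ℕ}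
    (hm : 0 < m) (hN : e * m = Fintype.card F - 1) (hcm : c ^ m = 1) :
    ∃ lam : F, lam ≠ 0 ∧ lam ^ e = c := by
  classical
  have hN' : e * m = Fintype.card Fˣ := by rw [Fintype.card_units]; exact hN
  obtain ⟨g, hg⟩ := IsCyclic.exists_generator (α := Fˣ)
  have hog : orderOf g = Fintype.card Fˣ := by
    rw [orderOf_eq_card_of_forall_mem_zpowers hg, Nat.card_eq_fintype_card]
  set u : Fˣ := Units.mk0 c hc with hu
  obtain ⟨a, ha0⟩ := hg u
  have ha : g ^ a = u := ha0
  have hum : u ^ m = 1 := by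
    apply Units.ext
    rw [Units.val_pow_eq_pow_val]
    simpa [hu] using hcm
  have h1 : g ^ (a * (m : ℤ)) = 1 := by
    rw [zpow_mul, ha, zpow_natCast, hum]
  have h2 : ((e * m : ℕ) : ℤ) ∣ a * m := by
    rw [hN', ← hog]
    exact orderOf_dvd_iff_zpow_eq_one.mpr h1
  obtain ⟨t, ht⟩ := h2
  have hmZ : (m : ℤ) ≠ 0 := by exact_mod_cast hm.ne'
  have ha' : a = (e : ℤ) * t := by
    have h3 : a * (m : ℤ) = ((e : ℤ) * t) * m := by push_cast at ht; linear_combination ht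
    exact mul_right_cancel₀ hmZ h3
  refine ⟨((g ^ t : Fˣ) : F), Units.ne_zero _, ?_⟩
  have h4 : (g ^ t) ^ e = u := by
    rw [← zpow_natCast (g ^ t) e, ← zpow_mul, mul_comm, ← ha', ha]
  calc ((g ^ t : Fˣ) : F) ^ e = (((g ^ t) ^ e : Fˣ) : F) := by
        rw [Units.val_pow_eq_pow_val]
    _ = c := by rw [h4, hu]; rfl

/-- Let `k ⊆ F` be finite fields, `W` a `kG`-module such that
`V = F ⊗[k] W` is absolutely irreducible over `F`; identify `G` with its image in `GL(V)`
(each `g` acting as the base change `ρ g` of its action on `W`) and identify `W` with the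
`k`-subspace `{1 ⊗ w}` of `V`.  Then every `h ∈ GL(V)` normalizing the image of `G`
factors as `h = c • h'` with `c ∈ F^×` a scalar and `h' ∈ GL(V)` stabilising `W`;
i.e. `N_{GL(V)}(G) ≤ N_{GL(V)}(W) F^×`. -/
theorem stmt_9 (k F : Type) [Field k] [Fintype k] [Field F] [Fintype F] [Algebra k F]
    (G : Type) [Group G] [Finite G]
    (W : Type) [AddCommGroup W] [Module k W] [FiniteDimensional k W] [Nontrivial W]
    [DistribMulAction G W] [SMulCommClass G k W]
    (ρ : G → Module.End F (F ⊗[k] W))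
    (hρ : ∀ g : G, ρ g = LinearMap.baseChange F (DistribMulAction.toLinearMap k W g))
    -- absolute irreducibility of V = F ⊗[k] W as an FG-module
    (hirr : ∀ U : Submodule F (F ⊗[k] W), (∀ g : G, ∀ x ∈ U, ρ g x ∈ U) → U = ⊥ ∨ U = ⊤)
    (habs : ∀ φ : Module.End F (F ⊗[k] W), (∀ g : G, φ ∘ₗ ρ g = ρ g ∘ₗ φ) →
      ∃ c : F, φ = c • LinearMap.id)
    -- h normalizes the image of G in GL(V): h ρ(g) h⁻¹ and h⁻¹ ρ(g) h are again in ρ(G)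
    (h : (F ⊗[k] W) ≃ₗ[F] (F ⊗[k] W))
    (hnorm₁ : ∀ g : G, ∃ g' : G, (h : (F ⊗[k] W) →ₗ[F] (F ⊗[k] W)) ∘ₗ ρ g =
      ρ g' ∘ₗ (h : (F ⊗[k] W) →ₗ[F] (F ⊗[k] W)))
    (hnorm₂ : ∀ g : G, ∃ g' : G, ρ g ∘ₗ (h : (F ⊗[k] W) →ₗ[F] (F ⊗[k] W)) =
      (h : (F ⊗[k] W) →ₗ[F] (F ⊗[k] W)) ∘ₗ ρ g') :
    ∃ (c : F) (h' : (F ⊗[k] W) ≃ₗ[F] (F ⊗[k] W)), c ≠ 0 ∧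
      (Submodule.map (((h' : (F ⊗[k] W) →ₗ[F] (F ⊗[k] W)).restrictScalars k))
          (LinearMap.range (TensorProduct.mk k F W 1)) =
        LinearMap.range (TensorProduct.mk k F W 1)) ∧
      ∀ x : F ⊗[k] W, h x = c • h' x := by
  classical
  set q := Fintype.card k with hqdef
  have hq2 : 2 ≤ q := Fintype.one_lt_card
  have hn : 0 < Module.finrank k F := Module.finrank_pos
  set n := Module.finrank k F with hndef
  -- the semilinear map s and its basic properties
  have hs_smul : ∀ (c : F) (x : F ⊗[k] W),
      sAux k F W (c • x) = c ^ q • sAux k F W x := fun c x => sAux_smul k F W c x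
  have hs_comm : ∀ (g : G) (x : F ⊗[k] W), sAux k F W (ρ g x) = ρ g (sAux k F W x) := by
    intro g x
    rw [hρ]
    induction x using TensorProduct.induction_on with
    | zero => simp
    | tmul a w =>
        rw [LinearMap.baseChange_tmul, sAux_tmul, sAux_tmul, LinearMap.baseChange_tmul]
    | add x y hx hy => rw [map_add, map_add, hx, hy, map_add, map_add]
  -- the F-linear "twisted conjugate" of h
  let hσ : Module.End F (F ⊗[k] W) :=
    { toFun := fun x => sAux k F W (h ((sAux k F W).symm x))
      map_add' := fun x y => by simp
      map_smul' := fun c x => by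
        obtain ⟨d, hd⟩ := (frobAlg k F).surjective c
        rw [frobAlg_apply] at hd
        have h1 : (sAux k F W).symm (c • x) = d • (sAux k F W).symm x := by
          apply (sAux k F W).injective
          rw [LinearEquiv.apply_symm_apply, hs_smul, hd, LinearEquiv.apply_symm_apply]
        rw [RingHom.id_apply, h1, map_smul, hs_smul, hd] }
  have hσ_apply : ∀ x, hσ x = sAux k F W (h ((sAux k F W).symm x)) := fun _ => rfl
  -- hσ ∘ h⁻¹ commutes with the G-action
  have hφcomm : ∀ g : G,
      (hσ ∘ₗ (h.symm : (F ⊗[k] W) →ₗ[F] (F ⊗[k] W))) ∘ₗ ρ g =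
        ρ g ∘ₗ (hσ ∘ₗ (h.symm : (F ⊗[k] W) →ₗ[F] (F ⊗[k] W))) := by
    intro g
    obtain ⟨g', hg'⟩ := hnorm₂ g
    have hg'x : ∀ y, ρ g (h y) = h (ρ g' y) := fun y => LinearMap.ext_iff.mp hg' y
    apply LinearMap.ext
    intro x
    simp only [LinearMap.comp_apply, LinearEquiv.coe_coe]
    have h5 : h.symm (ρ g x) = ρ g' (h.symm x) := by
      apply h.injective
      rw [LinearEquiv.apply_symm_apply, ← hg'x, LinearEquiv.apply_symm_apply]
    rw [h5, hσ_apply, hσ_apply]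
    have h6 : (sAux k F W).symm (ρ g' (h.symm x)) =
        ρ g' ((sAux k F W).symm (h.symm x)) := by
      apply (sAux k F W).injective
      rw [LinearEquiv.apply_symm_apply, hs_comm, LinearEquiv.apply_symm_apply]
    rw [h6, ← hg'x, hs_comm]
  obtain ⟨c₀, hc₀⟩ := habs _ hφcomm
  -- key twisted-commutation relation
  have key : ∀ x, sAux k F W (h x) = c₀ • h (sAux k F W x) := by
    intro x
    have e := LinearMap.ext_iff.mp hc₀ (h (sAux k F W x))
    simp only [LinearMap.comp_apply, LinearEquiv.coe_coe, LinearMap.smul_apply,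
      LinearMap.id_apply] at e
    rw [LinearEquiv.symm_apply_apply, hσ_apply, LinearEquiv.symm_apply_apply] at e
    exact e
  -- a nonzero vector
  have hWpos : 0 < Module.finrank k W := Module.finrank_pos
  set b := Module.finBasis k W with hb
  set bF := Algebra.TensorProduct.basis F b with hbF
  set i0 : Fin (Module.finrank k W) := ⟨0, hWpos⟩ with hi0
  have hz : bF i0 ≠ 0 := bF.ne_zero i0
  have hc0ne : c₀ ≠ 0 := by
    intro h0
    have e := key (h.symm ((sAux k F W).symm (bF i0)))
    rw [LinearEquiv.apply_symm_apply, LinearEquiv.apply_symm_apply, h0, zero_smul] at e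
    exact hz e
  -- iterate the relation
  set sl : (F ⊗[k] W) →ₗ[k] (F ⊗[k] W) := (sAux k F W : (F ⊗[k] W) →ₗ[k] (F ⊗[k] W))
    with hsl
  have hsl_apply : ∀ x, sl x = sAux k F W x := fun _ => rfl
  have keyiter : ∀ (j : ℕ) (x : F ⊗[k] W),
      (sl ^ j) (h x) = c₀ ^ (∑ i ∈ Finset.range j, q ^ i) • h ((sl ^ j) x) := by
    intro j
    induction j with
    | zero => intro x; simp
    | succ j ih =>
        intro x
        rw [pow_succ', Module.End.mul_apply, Module.End.mul_apply, ih, hsl_apply, hs_smul,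
          hsl_apply, key, smul_smul, geom_sum_succ, ← pow_mul, ← pow_succ, Nat.mul_comm]
  have hsl_pow_tmul : ∀ (j : ℕ) (a : F) (w : W),
      (sl ^ j) (a ⊗ₜ[k] w) = (a ^ q ^ j) ⊗ₜ[k] w := by
    intro j
    induction j with
    | zero => intro a w; simp
    | succ j ih =>
        intro a w
        rw [pow_succ', Module.End.mul_apply, ih, hsl_apply, sAux_tmul, ← pow_mul, ← pow_succ]
  have hcardF : Fintype.card F = q ^ n := Module.card_eq_pow_finrank (K := k) (V := F)
  have hsn : ∀ x : F ⊗[k] W, (sl ^ n) x = x := by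
    intro x
    induction x using TensorProduct.induction_on with
    | zero => simp
    | tmul a w => rw [hsl_pow_tmul, ← hcardF, FiniteField.pow_card]
    | add x y hx hy => rw [map_add, hx, hy]
  -- the norm of c₀ is 1
  have hm1 : c₀ ^ (∑ i ∈ Finset.range n, q ^ i) = 1 := by
    have e := keyiter n (h.symm (bF i0))
    rw [hsn, hsn, LinearEquiv.apply_symm_apply] at e
    refine smul_left_injective F hz ?_
    show (c₀ ^ (∑ i ∈ Finset.range n, q ^ i)) • bF i0 = (1 : F) • bF i0
    rw [one_smul]
    exact e.symm
  have hm0 : 0 < ∑ i ∈ Finset.range n, q ^ i :=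
    Finset.sum_pos (fun i _ => pow_pos (by omega) i)
      (Finset.nonempty_range_iff.mpr hn.ne')
  have hN : (q - 1) * (∑ i ∈ Finset.range n, q ^ i) = Fintype.card F - 1 := by
    have h9 : (((q - 1) * (∑ i ∈ Finset.range n, q ^ i) : ℕ) : ℤ)
        = ((Fintype.card F - 1 : ℕ) : ℤ) := by
      rw [Nat.cast_mul, Nat.cast_sub (by omega : 1 ≤ q),
        Nat.cast_sub (Fintype.card_pos : 1 ≤ Fintype.card F), hcardF]
      push_cast
      linear_combination geom_sum_mul (q : ℤ) n
    exact_mod_cast h9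
  obtain ⟨lam, hlam0, hlamc⟩ := aux_hilbert F hc0ne hm0 hN hm1
  -- the corrected map h' = lam⁻¹ • h
  set h' : (F ⊗[k] W) ≃ₗ[F] (F ⊗[k] W) :=
    h.trans (LinearEquiv.smulOfNeZero F (F ⊗[k] W) lam⁻¹ (inv_ne_zero hlam0)) with hh'
  have h'_apply : ∀ x, h' x = lam⁻¹ • h x := fun _ => rfl
  have hq1 : q - 1 + 1 = q := by omega
  have hk : lam⁻¹ ^ q * c₀ = lam⁻¹ := by
    rw [← hlamc]
    calc lam⁻¹ ^ q * lam ^ (q - 1) = lam⁻¹ ^ (q - 1 + 1) * lam ^ (q - 1) := by rw [hq1]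
      _ = lam⁻¹ * ((lam⁻¹ * lam) ^ (q - 1)) := by rw [pow_succ, mul_pow]; ring
      _ = lam⁻¹ := by rw [inv_mul_cancel₀ hlam0, one_pow, mul_one]
  have hcomm' : ∀ x, sAux k F W (h' x) = h' (sAux k F W x) := by
    intro x
    rw [h'_apply, h'_apply, hs_smul, key, smul_smul, hk]
  refine ⟨lam, h', hlam0, ?_, ?_⟩
  · ext x
    simp only [Submodule.mem_map, LinearMap.restrictScalars_apply, LinearEquiv.coe_coe]
    constructor
    · rintro ⟨y, hy, rfl⟩
      rw [← sAux_fixed_iff] at hy ⊢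
      rw [hcomm', hy]
    · intro hx
      refine ⟨h'.symm x, ?_, by simp⟩
      rw [← sAux_fixed_iff] at hx ⊢
      apply h'.injective
      rw [← hcomm', LinearEquiv.apply_symm_apply]
      exact hx
  · intro x
    rw [h'_apply, smul_smul, mul_inv_cancel₀ hlam0, one_smul]
end

section
/- Let L be a finite group, let Z = Z(L) be its center, and let φ : L → L/Z be the quotient map. Suppose L/Z is an internal direct product of normal subgroups Y_1, ..., Y_k, each of which is a nonabelian simple group. Then there exist subgroups Q_1, ..., Q_k of L such that for each i: φ(Q_i) = Y_i; Q_i is perfect (Q_i' = Q_i); Z(Q_i) = Q_i ∩ Z, so that Q_i/Z(Q_i) ≅ Y_i and hence Q_i is quasisimple; and the Q_i pairwise commute elementwise ([Q_i, Q_j] = 1 for i ≠ j), so that the product Q_1 Q_2 ⋯ Q_k is an internal central product. -/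
/-!
Take `Qᵢ` to be the derived subgroup of the full preimage `Pᵢ = φ⁻¹(Yᵢ)`. Since `Yᵢ` is nonabelian
simple it is perfect, so `φ(Qᵢ) = Yᵢ' = Yᵢ` and `Pᵢ = Qᵢ Z`. Commutators ignore central factors,
hence `Qᵢ' = Pᵢ' = Qᵢ`. For `i ≠ j` the image of `[Qᵢ, Qⱼ]` is `[Yᵢ, Yⱼ] = 1`, so
`[Qᵢ, Qⱼ] ≤ Z`; the three subgroups lemma then gives `[Qᵢ, Qⱼ] = [[Qᵢ, Qᵢ], Qⱼ] = 1`. Finally an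
element of `Qᵢ` central in `Qᵢ` maps into the center of `Yᵢ`, which is trivial.
-/

open scoped commutatorElement

namespace Subgroup

variable {G : Type*} [Group G]

section IsSimpleGroup

variable {Y : Subgroup G} [IsSimpleGroup Y]

theorem commutator_self_eq_of_isSimpleGroup (hY : ∃ a ∈ Y, ∃ b ∈ Y, a * b ≠ b * a) :
    ⁅Y, Y⁆ = Y := by
  obtain ⟨a, ha, b, hb, hab⟩ := hY
  have hcomm : _root_.commutator Y = ⊤ := by
    refine (commutator_normal (⊤ : Subgroup Y) ⊤).eq_bot_or_eq_top.resolve_left fun h => hab ?_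
    have := commutator_mem_commutator (mem_top (⟨a, ha⟩ : Y)) (mem_top ⟨b, hb⟩)
    rw [h, mem_bot, commutatorElement_eq_one_iff_mul_comm] at this
    exact congrArg Subtype.val this
  rw [← range_subtype Y, MonoidHom.range_eq_map, ← map_commutator, ← _root_.commutator_def, hcomm]

theorem eq_one_of_forall_commute_of_isSimpleGroup (hY : ∃ a ∈ Y, ∃ b ∈ Y, a * b ≠ b * a)
    {x : G} (hx : x ∈ Y) (hc : ∀ y ∈ Y, Commute x y) : x = 1 := by
  obtain ⟨a, ha, b, hb, hab⟩ := hY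
  have hcenter : center Y = ⊥ := by
    refine (IsSimpleGroup.eq_bot_or_eq_top_of_normal _ inferInstance).resolve_right fun h => hab ?_
    have : (⟨a, ha⟩ : Y) ∈ center Y := h ▸ mem_top _
    exact congrArg Subtype.val (mem_center_iff.mp this ⟨b, hb⟩).symm
  have : (⟨x, hx⟩ : Y) ∈ center Y :=
    mem_center_iff.mpr fun ⟨y, hy⟩ => Subtype.ext (hc y hy).symm
  rw [hcenter, mem_bot] at this
  exact congrArg Subtype.val this

end IsSimpleGroup

theorem commutatorElement_mul_left_of_mem_center (a b : G) {z : G} (hz : z ∈ center G) :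
    ⁅a * z, b⁆ = ⁅a, b⁆ := by
  rw [commutatorElement_def, commutatorElement_def, mul_assoc a z, ← mem_center_iff.mp hz b]
  group

theorem commutatorElement_mul_right_of_mem_center (a b : G) {z : G} (hz : z ∈ center G) :
    ⁅a, b * z⁆ = ⁅a, b⁆ := by
  rw [← commutatorElement_inv, commutatorElement_mul_left_of_mem_center _ _ hz,
    commutatorElement_inv]

theorem commutator_sup_eq_of_le_center {N : Subgroup G} [N.Normal] (hN : N ≤ center G)
    (A B : Subgroup G) : ⁅A ⊔ N, B ⊔ N⁆ = ⁅A, B⁆ := by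
  refine le_antisymm (commutator_le.mpr ?_) (commutator_mono le_sup_left le_sup_left)
  rintro _ haz _ hbw
  obtain ⟨a, ha, z, hz, rfl⟩ := mem_sup_of_normal_right.mp haz
  obtain ⟨b, hb, w, hw, rfl⟩ := mem_sup_of_normal_right.mp hbw
  rw [commutatorElement_mul_left_of_mem_center _ _ (hN hz),
    commutatorElement_mul_right_of_mem_center _ _ (hN hw)]
  exact commutator_mem_commutator ha hb

theorem commutator_eq_bot_of_perfect_of_le_center {A B : Subgroup G} (hA : ⁅A, A⁆ = A)
    (hAB : ⁅A, B⁆ ≤ center G) : ⁅A, B⁆ = ⊥ := by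
  have hcentral : ∀ {C : Subgroup G}, C ≤ center G → ∀ D : Subgroup G, ⁅C, D⁆ = ⊥ :=
    fun hC D => commutator_eq_bot_iff_le_centralizer.mpr (hC.trans (center_le_centralizer _))
  rw [← hA]
  exact commutator_commutator_eq_bot_of_rotate (hcentral hAB A)
    (hcentral (commutator_comm A B ▸ hAB) A)

section CentralExtension

variable {H : Type*} [Group H] {f : G →* H} {Y : Subgroup H}

theorem map_commutator_comap_of_surjective (hf : Function.Surjective f) (hY : ⁅Y, Y⁆ = Y) :
    ⁅Y.comap f, Y.comap f⁆.map f = Y := by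
  rw [map_commutator, map_comap_eq_self_of_surjective hf, hY]

theorem commutator_commutator_comap_of_ker_le_center (hf : Function.Surjective f)
    (hker : f.ker ≤ center G) (hY : ⁅Y, Y⁆ = Y) :
    ⁅⁅Y.comap f, Y.comap f⁆, ⁅Y.comap f, Y.comap f⁆⁆ = ⁅Y.comap f, Y.comap f⁆ := by
  have hP : Y.comap f = ⁅Y.comap f, Y.comap f⁆ ⊔ f.ker := by
    rw [← comap_map_eq, map_commutator_comap_of_surjective hf hY]
  conv_rhs => rw [hP, commutator_sup_eq_of_le_center hker]

theorem commutator_eq_bot_of_map_commutator_eq_bot (hker : f.ker ≤ center G) {A B : Subgroup G}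
    (hA : ⁅A, A⁆ = A) (hAB : ⁅A.map f, B.map f⁆ = ⊥) : ⁅A, B⁆ = ⊥ := by
  refine commutator_eq_bot_of_perfect_of_le_center hA (le_trans ?_ hker)
  rwa [← map_eq_bot_iff, map_commutator]

end CentralExtension

end Subgroup

open Subgroup

theorem stmt_14_general (L : Type) [Group L] (n : ℕ)
    (Y : Fin n → Subgroup (L ⧸ Subgroup.center L))
    (hsimple : ∀ i, IsSimpleGroup (Y i))
    (hnonab : ∀ i, ∃ a ∈ Y i, ∃ b ∈ Y i, a * b ≠ b * a)
    (hcommY : Pairwise fun i j =>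
      ∀ x y : L ⧸ Subgroup.center L, x ∈ Y i → y ∈ Y j → Commute x y) :
    ∃ Q : Fin n → Subgroup L,
      (∀ i, Subgroup.map (QuotientGroup.mk' (Subgroup.center L)) (Q i) = Y i) ∧
      (∀ i, ⁅Q i, Q i⁆ = Q i) ∧
      (∀ i, ∀ x ∈ Q i, ((∀ y ∈ Q i, Commute x y) ↔ x ∈ Subgroup.center L)) ∧
      Pairwise fun i j => ∀ x ∈ Q i, ∀ y ∈ Q j, Commute x y := by
  set φ := QuotientGroup.mk' (center L)
  have hφ : Function.Surjective φ := QuotientGroup.mk'_surjective _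
  have hker : φ.ker ≤ center L := (QuotientGroup.ker_mk' _).le
  have hperfY i : ⁅Y i, Y i⁆ = Y i :=
    have := hsimple i; commutator_self_eq_of_isSimpleGroup (hnonab i)
  set Q := fun i => ⁅(Y i).comap φ, (Y i).comap φ⁆
  have hmap i : (Q i).map φ = Y i := map_commutator_comap_of_surjective hφ (hperfY i)
  have hperf i : ⁅Q i, Q i⁆ = Q i :=
    commutator_commutator_comap_of_ker_le_center hφ hker (hperfY i)
  refine ⟨Q, hmap, hperf, fun i x hx => ⟨fun hc => ?_, fun hxZ y _ => ?_⟩, fun i j hij => ?_⟩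
  · rw [← QuotientGroup.eq_one_iff]
    have := hsimple i
    refine eq_one_of_forall_commute_of_isSimpleGroup (hnonab i) (hmap i ▸ mem_map_of_mem φ hx) ?_
    rw [← hmap i]
    rintro _ ⟨y, hy, rfl⟩
    exact (hc y hy).map φ
  · exact (mem_center_iff.mp hxZ y).symm
  · have hYij : ⁅Y i, Y j⁆ = ⊥ := commutator_eq_bot_iff_le_centralizer.mpr
      fun x hx y hy => (hcommY hij x y hx hy).symm
    have hQij : ⁅Q i, Q j⁆ = ⊥ :=
      commutator_eq_bot_of_map_commutator_eq_bot hker (hperf i) (by rw [hmap, hmap, hYij])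
    intro x hx y hy
    simpa [hQij, commutatorElement_eq_one_iff_commute] using commutator_mem_commutator hx hy

/-- Let `L` be a finite group with center `Z`, and suppose `L/Z` is an
internal direct product of normal subgroups `Y₁, ..., Yₙ`, each nonabelian simple (internal
direct product encoded by the bijectivity of the product map `Π i, Y i → L/Z`).  Then there
are subgroups `Q i ≤ L` with `φ(Q i) = Y i`, each `Q i` perfect, with `Z(Q i) = Q i ∩ Z`
(so each `Q i` is quasisimple), and the `Q i` pairwise commute elementwise, so their product
is an internal central product. -/
theorem stmt_14 (L : Type) [Group L] [Finite L] (n : ℕ)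
    (Y : Fin n → Subgroup (L ⧸ Subgroup.center L))
    (hnormal : ∀ i, (Y i).Normal)
    (hsimple : ∀ i, IsSimpleGroup (Y i))
    (hnonab : ∀ i, ∃ a ∈ Y i, ∃ b ∈ Y i, a * b ≠ b * a)
    (hcommY : Pairwise fun i j =>
      ∀ x y : L ⧸ Subgroup.center L, x ∈ Y i → y ∈ Y j → Commute x y)
    (hprod : Function.Bijective (Subgroup.noncommPiCoprod hcommY)) :
    ∃ Q : Fin n → Subgroup L,
      (∀ i, Subgroup.map (QuotientGroup.mk' (Subgroup.center L)) (Q i) = Y i) ∧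
      (∀ i, ⁅Q i, Q i⁆ = Q i) ∧
      (∀ i, ∀ x ∈ Q i, ((∀ y ∈ Q i, Commute x y) ↔ x ∈ Subgroup.center L)) ∧
      Pairwise fun i j => ∀ x ∈ Q i, ∀ y ∈ Q j, Commute x y :=
  stmt_14_general L n Y hsimple hnonab hcommY
end

section
/- Let L be a finite nonabelian solvable group whose center Z(L) is cyclic and such that every proper characteristic subgroup of L is contained in Z(L). Then L is an r-group for some prime r, the commutator subgroup L' is contained in Z(L) (so L is nilpotent of class 2), and every characteristic abelian subgroup of L is cyclic; that is, L is a symplectic-type r-group. -/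
/-!
Solvability makes `L'` a proper characteristic subgroup, so `L' ≤ Z(L)` and `L` is nilpotent.
Its Sylow subgroups are then normal, hence characteristic; were they all proper, they would all
be central, and since a subgroup containing every Sylow subgroup has index divisible by no prime,
`L` would be abelian. A characteristic abelian subgroup is proper, hence lies in the cyclic
group `Z(L)`.
-/

variable {G : Type*} [Group G]

theorem Group.isNilpotent_of_commutator_le_center (h : commutator G ≤ Subgroup.center G) :
    Group.IsNilpotent G :=
  Subgroup.nilpotent_iff_lowerCentralSeries.mpr
    ⟨2, Subgroup.lowerCentralSeries_succ_eq_bot ⊤ (by rwa [Subgroup.top_lowerCentralSeries_one])⟩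

theorem Sylow.isPGroup_of_coe_eq_top {p : ℕ} (P : Sylow p G) (h : (P : Subgroup G) = ⊤) :
    IsPGroup p G :=
  P.isPGroup'.of_equiv ((MulEquiv.subgroupCongr h).trans Subgroup.topEquiv)

namespace Subgroup

theorem center_ne_top_of_not_commute (hna : ¬∀ a b : G, a * b = b * a) : center G ≠ ⊤ :=
  fun h => hna fun a b => mem_center_iff.mp (h ▸ mem_top b) a

theorem eq_top_of_forall_sylow_le [Finite G] {H : Subgroup G}
    (h : ∀ (p : ℕ) [Fact p.Prime] (P : Sylow p G), (P : Subgroup G) ≤ H) : H = ⊤ := by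
  rw [← index_eq_one]
  by_contra hH
  obtain ⟨p, hp, hpH⟩ := Nat.exists_prime_and_dvd hH
  have : Fact p.Prime := ⟨hp⟩
  obtain ⟨P⟩ : Nonempty (Sylow p G) := inferInstance
  exact P.not_dvd_index (hpH.trans (index_dvd_of_le (h p P)))

end Subgroup

theorem exists_isPGroup_of_forall_characteristic_ne_top_le_center [Finite G]
    [Group.IsNilpotent G] (hG : Subgroup.center G ≠ ⊤)
    (hchar : ∀ K : Subgroup G, K.Characteristic → K ≠ ⊤ → K ≤ Subgroup.center G) :
    ∃ r : ℕ, r.Prime ∧ IsPGroup r G := by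
  by_contra! hno
  refine hG (Subgroup.eq_top_of_forall_sylow_le fun p hp P => ?_)
  refine hchar _ (P.characteristic_of_normal inferInstance) fun htop => ?_
  exact hno p hp.out (P.isPGroup_of_coe_eq_top htop)

/-- Let `L` be a finite nonabelian solvable group whose center is cyclic
and such that every proper characteristic subgroup of `L` is contained in `Z(L)`.  Then `L`
is an `r`-group for some prime `r`, `L' ≤ Z(L)` (so `L` is nilpotent of class 2), and every
characteristic abelian subgroup of `L` is cyclic, i.e. `L` is a symplectic-type `r`-group. -/
theorem stmt_18 (L : Type) [Group L] [Finite L]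
    (hna : ¬∀ a b : L, a * b = b * a)
    (hsolv : IsSolvable L)
    (hZcyc : IsCyclic (Subgroup.center L))
    (hchar : ∀ K : Subgroup L, K.Characteristic → K ≠ ⊤ → K ≤ Subgroup.center L) :
    (∃ r : ℕ, r.Prime ∧ IsPGroup r L) ∧
    commutator L ≤ Subgroup.center L ∧
    ∀ K : Subgroup L, K.Characteristic → (∀ a ∈ K, ∀ b ∈ K, a * b = b * a) → IsCyclic K := by
  have : Nontrivial L := by
    by_contra! h
    exact hna fun a b => Subsingleton.elim _ _
  have : Group.IsSolvable L := hsolv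
  have hcomm : commutator L ≤ Subgroup.center L :=
    hchar _ (Subgroup.commutator_characteristic ⊤ ⊤)
      (Group.IsSolvable.commutator_lt_top_of_nontrivial L).ne
  have := Group.isNilpotent_of_commutator_le_center hcomm
  refine ⟨exists_isPGroup_of_forall_characteristic_ne_top_le_center
    (Subgroup.center_ne_top_of_not_commute hna) hchar, hcomm, fun K hK hKcomm => ?_⟩
  have hK_ne_top : K ≠ ⊤ := by
    rintro rfl
    exact hna fun a b => hKcomm a (Subgroup.mem_top a) b (Subgroup.mem_top b)
  exact Subgroup.isCyclic_of_le (hchar K hK hK_ne_top)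
end
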